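/- arXiv:1309.2494 — 6 statements merged into one kernel-verified Lean document; each statement's English description precedes it below -/
import Mathlib

section
/- Let Ω = ℝ × (−1,1) ⊂ ℝ², Ω₊ = Ω ∩ {x₁ ≥ 0}, Ω₋ = Ω ∩ {x₁ ≤ 0}, and let θ ∈ (0, π). Let m₂ : Ω → [−1,1] be measurable, and let m̄₂(x₁) := (1/2) ∫_{−1}^{1} m₂(x₁, x₃) dx₃ denote its vertical average. Assume: (a) m̄₂ is continuous on ℝ; (b) ∫_Ω |m₂(x) − m̄₂(x₁)|² dx < ∞; (c) ∫_Ω ( |m₂(x)| − sin θ )² dx < ∞; (d) |m̄₂(s)| → sin θ as |s| → ∞; (e) limsup_{s→−∞} m̄₂(s) ≤ 0 and liminf_{s→+∞} m̄₂(s) ≥ 0. Then ∫_{Ω₋} ( m₂(x) + sin θ )² dx + ∫_{Ω₊} ( m₂(x) − sin θ )² dx < ∞. -/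
/-!
Since `|m̄₂| → sin θ > 0`, the sign conditions force `m̄₂ ≥ 0` on `[R, ∞)` and `m̄₂ ≤ 0` on
`(-∞, -R]` for some `R`. Wherever `v ≥ 0` one has
`(u - σ)² ≤ 2 (|u| - σ)² + 8 (u - v)²`, so on `Ω₊ ∩ {x₁ > R}` the integrand `(m₂ - sin θ)²` is
controlled by the integrands of (b) and (c) with `v = m̄₂(x₁)`. On the box `[-R, R] × (-1, 1)`,
which has finite measure, the integrand is bounded by `4`. The half-strip `Ω₋` is treated in the
same way after replacing `m₂` by `-m₂`.
-/

open MeasureTheory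

/-- The strip `Ω = ℝ × (−1,1) ⊂ ℝ²`. -/
def strip : Set (ℝ × ℝ) := (Set.univ : Set ℝ) ×ˢ Set.Ioo (-1 : ℝ) 1

/-- `Ω₊ = Ω ∩ {x₁ ≥ 0}`. -/
def stripPlus : Set (ℝ × ℝ) := Set.Ici (0 : ℝ) ×ˢ Set.Ioo (-1 : ℝ) 1

/-- `Ω₋ = Ω ∩ {x₁ ≤ 0}`. -/
def stripMinus : Set (ℝ × ℝ) := Set.Iic (0 : ℝ) ×ˢ Set.Ioo (-1 : ℝ) 1

open Filter Topology Set

-- For `u < 0`: `u - σ = (|u| - σ) + 2u` and `u ^ 2 ≤ (u - v) ^ 2`.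
lemma sq_sub_le_sq_abs_sub_add_sq_sub {u v σ : ℝ} (hv : 0 ≤ v) :
    (u - σ) ^ 2 ≤ 2 * (|u| - σ) ^ 2 + 8 * (u - v) ^ 2 := by
  rcases abs_cases u with ⟨h, hu⟩ | ⟨h, hu⟩
  · rw [h]; nlinarith [sq_nonneg (u - v)]
  · rw [h]
    nlinarith [sq_nonneg (3 * u + σ), sq_nonneg v, mul_nonneg hv (neg_nonneg.2 hu.le)]

lemma eventually_nonneg_of_tendsto_abs {α : Type*} {l : Filter α} {f : α → ℝ} {σ : ℝ}
    (hσ : 0 < σ) (hf : Tendsto (fun t => |f t|) l (𝓝 σ)) (h : 0 ≤ liminf f l) :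
    ∀ᶠ t in l, 0 ≤ f t := by
  have hbdd : l.IsBoundedUnder (· ≥ ·) f := (isBoundedUnder_le_abs.mp hf.isBoundedUnder_le).2
  filter_upwards [hf.eventually (eventually_gt_nhds (half_lt_self hσ)),
    eventually_lt_of_lt_liminf (show -(σ / 2) < liminf f l by linarith) hbdd] with t h₁ h₂
  cases abs_cases (f t) <;> linarith

lemma eventually_nonpos_of_tendsto_abs {α : Type*} {l : Filter α} {f : α → ℝ} {σ : ℝ}
    (hσ : 0 < σ) (hf : Tendsto (fun t => |f t|) l (𝓝 σ)) (h : limsup f l ≤ 0) :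
    ∀ᶠ t in l, f t ≤ 0 := by
  have hbdd : l.IsBoundedUnder (· ≤ ·) f := (isBoundedUnder_le_abs.mp hf.isBoundedUnder_le).1
  filter_upwards [hf.eventually (eventually_gt_nhds (half_lt_self hσ)),
    eventually_lt_of_limsup_lt (show limsup f l < σ / 2 by linarith) hbdd] with t h₁ h₂
  cases abs_cases (f t) <;> linarith

section

variable {α : Type*} [MeasurableSpace α] {μ : Measure α} {u v : α → ℝ} {σ : ℝ}

lemma lintegral_ofReal_sq_sub_lt_top (hu : AEMeasurable u μ)
    (hv : ∀ᵐ x ∂μ, 0 ≤ v x)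
    (habs : ∫⁻ x, ENNReal.ofReal ((|u x| - σ) ^ 2) ∂μ < ⊤)
    (hdiff : ∫⁻ x, ENNReal.ofReal ((u x - v x) ^ 2) ∂μ < ⊤) :
    ∫⁻ x, ENNReal.ofReal ((u x - σ) ^ 2) ∂μ < ⊤ := by
  have hpoint : ∀ᵐ x ∂μ, ENNReal.ofReal ((u x - σ) ^ 2) ≤
      2 * ENNReal.ofReal ((|u x| - σ) ^ 2) + 8 * ENNReal.ofReal ((u x - v x) ^ 2) := by
    filter_upwards [hv] with x hx
    calc ENNReal.ofReal ((u x - σ) ^ 2)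
        ≤ ENNReal.ofReal (2 * (|u x| - σ) ^ 2 + 8 * (u x - v x) ^ 2) :=
          ENNReal.ofReal_le_ofReal (sq_sub_le_sq_abs_sub_add_sq_sub hx)
      _ = _ := by
          rw [ENNReal.ofReal_add (by positivity) (by positivity),
            ENNReal.ofReal_mul zero_le_two, ENNReal.ofReal_mul (by norm_num)]
          norm_num
  have hmeas : AEMeasurable (fun x => 2 * ENNReal.ofReal ((|u x| - σ) ^ 2)) μ :=
    (((hu.abs.sub_const σ).pow_const 2).ennreal_ofReal).const_mul 2
  refine (lintegral_mono_ae hpoint).trans_lt ?_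
  rw [lintegral_add_left' hmeas, lintegral_const_mul' 2 _ ENNReal.ofNat_ne_top,
    lintegral_const_mul' 8 _ ENNReal.ofNat_ne_top]
  exact ENNReal.add_lt_top.mpr
    ⟨ENNReal.mul_lt_top (by norm_num) habs, ENNReal.mul_lt_top (by norm_num) hdiff⟩

lemma setLIntegral_ofReal_sq_sub_lt_top {S K : Set α} (hσ : 0 ≤ σ) (hσ₁ : σ ≤ 1)
    (hu : Measurable u) (hu₁ : ∀ x, u x ∈ Icc (-1 : ℝ) 1)
    (hS : MeasurableSet S) (hK : MeasurableSet K) (hKμ : μ K ≠ ⊤)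
    (hv : ∀ x ∈ S \ K, 0 ≤ v x)
    (habs : ∫⁻ x in S, ENNReal.ofReal ((|u x| - σ) ^ 2) ∂μ < ⊤)
    (hdiff : ∫⁻ x in S, ENNReal.ofReal ((u x - v x) ^ 2) ∂μ < ⊤) :
    ∫⁻ x in S, ENNReal.ofReal ((u x - σ) ^ 2) ∂μ < ⊤ := by
  have hbox : ∫⁻ x in K, ENNReal.ofReal ((u x - σ) ^ 2) ∂μ < ⊤ :=
    setLIntegral_lt_top_of_le_nnreal hKμ ⟨Real.toNNReal 4, fun x _ =>
      ENNReal.ofReal_le_ofReal (by nlinarith [(hu₁ x).1, (hu₁ x).2])⟩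
  have htail : ∫⁻ x in S \ K, ENNReal.ofReal ((u x - σ) ^ 2) ∂μ < ⊤ :=
    lintegral_ofReal_sq_sub_lt_top hu.aemeasurable
      (ae_restrict_of_forall_mem (hS.diff hK) hv)
      ((lintegral_mono_set sdiff_subset).trans_lt habs)
      ((lintegral_mono_set sdiff_subset).trans_lt hdiff)
  calc ∫⁻ x in S, ENNReal.ofReal ((u x - σ) ^ 2) ∂μ
      ≤ ∫⁻ x in K ∪ S \ K, ENNReal.ofReal ((u x - σ) ^ 2) ∂μ :=
        lintegral_mono_set (by simp)
    _ ≤ _ := lintegral_union_le _ _ _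
    _ < ⊤ := ENNReal.add_lt_top.mpr ⟨hbox, htail⟩

end

lemma setLIntegral_prod_Ioo_ofReal_sq_sub_lt_top {I : Set ℝ} {u : ℝ × ℝ → ℝ} {v : ℝ → ℝ}
    {σ R : ℝ} (hσ : 0 ≤ σ) (hσ₁ : σ ≤ 1) (hu : Measurable u) (hu₁ : ∀ x, u x ∈ Icc (-1 : ℝ) 1)
    (hI : MeasurableSet I) (hv : ∀ t ∈ I, R < |t| → 0 ≤ v t)
    (habs : ∫⁻ x in strip, ENNReal.ofReal ((|u x| - σ) ^ 2) < ⊤)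
    (hdiff : ∫⁻ x in strip, ENNReal.ofReal ((u x - v x.1) ^ 2) < ⊤) :
    ∫⁻ x in I ×ˢ Ioo (-1 : ℝ) 1, ENNReal.ofReal ((u x - σ) ^ 2) < ⊤ := by
  have hsub : I ×ˢ Ioo (-1 : ℝ) 1 ⊆ strip := prod_mono (subset_univ _) subset_rfl
  have hbox : volume (Icc (-R) R ×ˢ Ioo (-1 : ℝ) 1) ≠ ⊤ :=
    ((measure_mono (prod_mono subset_rfl Ioo_subset_Icc_self)).trans_lt
      (isCompact_Icc.prod isCompact_Icc).measure_lt_top).ne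
  refine setLIntegral_ofReal_sq_sub_lt_top hσ hσ₁ hu hu₁ (hI.prod measurableSet_Ioo)
    (measurableSet_Icc.prod measurableSet_Ioo) hbox ?_
    ((lintegral_mono_set hsub).trans_lt habs) ((lintegral_mono_set hsub).trans_lt hdiff)
  rintro ⟨t, y⟩ ⟨⟨ht, hy⟩, hnot⟩
  exact hv t ht (lt_of_not_ge fun h => hnot ⟨abs_le.mp h, hy⟩)

theorem stmt_2_general (θ : ℝ) (hθ : θ ∈ Set.Ioo 0 Real.pi)
    (m₂ : ℝ × ℝ → ℝ) (hmeas : Measurable m₂)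
    (hrange : ∀ x, m₂ x ∈ Set.Icc (-1 : ℝ) 1)
    (mbar : ℝ → ℝ)
    (hb : (∫⁻ x in strip, ENNReal.ofReal ((m₂ x - mbar x.1) ^ 2)) < ⊤)
    (hc : (∫⁻ x in strip, ENNReal.ofReal ((|m₂ x| - Real.sin θ) ^ 2)) < ⊤)
    (hd₁ : Filter.Tendsto (fun s => |mbar s|) Filter.atTop (nhds (Real.sin θ)))
    (hd₂ : Filter.Tendsto (fun s => |mbar s|) Filter.atBot (nhds (Real.sin θ)))
    (he₁ : Filter.limsup mbar Filter.atBot ≤ 0)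
    (he₂ : 0 ≤ Filter.liminf mbar Filter.atTop) :
    (∫⁻ x in stripMinus, ENNReal.ofReal ((m₂ x + Real.sin θ) ^ 2)) +
      (∫⁻ x in stripPlus, ENNReal.ofReal ((m₂ x - Real.sin θ) ^ 2)) < ⊤ := by
  have hσ : 0 < Real.sin θ := Real.sin_pos_of_pos_of_lt_pi hθ.1 hθ.2
  obtain ⟨Rpos, hRpos⟩ := eventually_atTop.mp (eventually_nonneg_of_tendsto_abs hσ hd₁ he₂)
  obtain ⟨Rneg, hRneg⟩ := eventually_atBot.mp (eventually_nonpos_of_tendsto_abs hσ hd₂ he₁)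
  have hplus := setLIntegral_prod_Ioo_ofReal_sq_sub_lt_top (I := Ici 0) (R := max Rpos (-Rneg))
    hσ.le (Real.sin_le_one θ) hmeas hrange measurableSet_Ici
    (fun t ht hR => hRpos t ((le_max_left _ _).trans (hR.le.trans_eq (abs_of_nonneg ht)))) hc hb
  have hminus := setLIntegral_prod_Ioo_ofReal_sq_sub_lt_top (I := Iic 0) (R := max Rpos (-Rneg))
    (u := fun x => -m₂ x) (v := fun t => -mbar t) hσ.le (Real.sin_le_one θ) hmeas.neg
    (fun x => neg_mem_Icc_iff.mpr (by simpa using hrange x)) measurableSet_Iic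
    (fun t ht hR => neg_nonneg.mpr <| hRneg t <| by
      linarith [le_max_right Rpos (-Rneg), abs_of_nonpos (mem_Iic.mp ht)])
    (by simpa only [abs_neg] using hc) (by simpa only [neg_sub_neg, sub_sq_comm] using hb)
  refine ENNReal.add_lt_top.mpr ⟨?_, hplus⟩
  simpa only [stripMinus, neg_sub_left, neg_sq, add_comm] using hminus

theorem stmt_2 (θ : ℝ) (hθ : θ ∈ Set.Ioo 0 Real.pi)
    (m₂ : ℝ × ℝ → ℝ) (hmeas : Measurable m₂)
    (hrange : ∀ x, m₂ x ∈ Set.Icc (-1 : ℝ) 1)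
    (mbar : ℝ → ℝ)
    (hmbar : ∀ x₁ : ℝ, mbar x₁ = (1 / 2) * ∫ x₃ in (-1 : ℝ)..1, m₂ (x₁, x₃))
    (ha : Continuous mbar)
    (hb : (∫⁻ x in strip, ENNReal.ofReal ((m₂ x - mbar x.1) ^ 2)) < ⊤)
    (hc : (∫⁻ x in strip, ENNReal.ofReal ((|m₂ x| - Real.sin θ) ^ 2)) < ⊤)
    (hd₁ : Filter.Tendsto (fun s => |mbar s|) Filter.atTop (nhds (Real.sin θ)))
    (hd₂ : Filter.Tendsto (fun s => |mbar s|) Filter.atBot (nhds (Real.sin θ)))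
    (he₁ : Filter.limsup mbar Filter.atBot ≤ 0)
    (he₂ : 0 ≤ Filter.liminf mbar Filter.atTop) :
    (∫⁻ x in stripMinus, ENNReal.ofReal ((m₂ x + Real.sin θ) ^ 2)) +
      (∫⁻ x in stripPlus, ENNReal.ofReal ((m₂ x - Real.sin θ) ^ 2)) < ⊤ :=
  stmt_2_general θ hθ m₂ hmeas hrange mbar hb hc hd₁ hd₂ he₁ he₂
end

section
/- Let N ≥ 1 and let f ∈ C²(ℝ^N, ℝ) be a non-negative function whose Hessian is uniformly bounded, i.e. K := sup_{x ∈ ℝ^N} ‖D²f(x)‖ < ∞ (operator norm). Then the function √f is Lipschitz continuous with Lipschitz constant √(K/2): for all x, y ∈ ℝ^N, |√(f(x)) − √(f(y))| ≤ √(K/2) · |x − y|. -/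
/-!
Taylor's formula with `‖D²f‖ ≤ K` gives `0 ≤ f (x + v) ≤ f x + Df(x) v + K / 2 * ‖v‖²`. Replacing
`v` by `t • v` yields a quadratic in `t` that is nonnegative, so its discriminant is `≤ 0`:
`(Df(x) v)² ≤ 2 K f(x) ‖v‖²`. Feeding this back into the Taylor bound gives
`f y ≤ (√(f x) + √(K / 2) * ‖y - x‖)²`, without ever differentiating `√f`.
-/

theorem image_le_of_hasDerivAt_le {f g f' g' : ℝ → ℝ} {a : ℝ}
    (hf : ∀ t, HasDerivAt f (f' t) t) (hg : ∀ t, HasDerivAt g (g' t) t)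
    (ha : f a ≤ g a) (hfg : ∀ t, a ≤ t → f' t ≤ g' t) {t : ℝ} (ht : a ≤ t) : f t ≤ g t :=
  image_le_of_deriv_right_le_deriv_boundary (b := t)
    (fun s _ ↦ (hf s).continuousAt.continuousWithinAt) (fun s _ ↦ (hf s).hasDerivWithinAt) ha
    (fun s _ ↦ (hg s).continuousAt.continuousWithinAt) (fun s _ ↦ (hg s).hasDerivWithinAt)
    (fun s hs ↦ hfg s hs.1) ⟨ht, le_rfl⟩

theorem le_add_mul_deriv_add_of_deriv2_le {φ φ' φ'' : ℝ → ℝ} {M : ℝ}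
    (hφ : ∀ t, HasDerivAt φ (φ' t) t) (hφ' : ∀ t, HasDerivAt φ' (φ'' t) t)
    (hM : ∀ t, φ'' t ≤ M) {t : ℝ} (ht : 0 ≤ t) :
    φ t ≤ φ 0 + t * φ' 0 + M / 2 * t ^ 2 := by
  have hline : ∀ s, HasDerivAt (fun s ↦ φ' 0 + M * s) M s := fun s ↦ by
    simpa using ((hasDerivAt_id s).const_mul M).const_add (φ' 0)
  have hparabola : ∀ s, HasDerivAt (fun s ↦ φ 0 + s * φ' 0 + M / 2 * s ^ 2) (φ' 0 + M * s) s :=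
    fun s ↦ (((hasDerivAt_id s).mul_const (φ' 0)).const_add (φ 0) |>.add
      ((hasDerivAt_pow 2 s).const_mul (M / 2))).congr_deriv (by push_cast; ring)
  have hderiv : ∀ s, 0 ≤ s → φ' s ≤ φ' 0 + M * s := fun s hs ↦
    image_le_of_hasDerivAt_le hφ' hline (by simp) (fun u _ ↦ hM u) hs
  exact image_le_of_hasDerivAt_le hφ hparabola (by simp) hderiv ht

section

variable {E : Type*} [NormedAddCommGroup E] [NormedSpace ℝ E] {f : E → ℝ} {K : ℝ}

theorem le_add_fderiv_add_of_norm_iteratedFDeriv_two_le (hf : ContDiff ℝ 2 f)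
    (hK : ∀ x, ‖iteratedFDeriv ℝ 2 f x‖ ≤ K) (x v : E) :
    f (x + v) ≤ f x + fderiv ℝ f x v + K / 2 * ‖v‖ ^ 2 := by
  have hline : ∀ t : ℝ, HasDerivAt (fun s : ℝ ↦ x + s • v) v t := fun t ↦ by
    simpa using ((hasDerivAt_id t).smul_const v).const_add x
  have hf' : ∀ y, HasFDerivAt f (fderiv ℝ f y) y := fun y ↦
    (hf.differentiable two_ne_zero y).hasFDerivAt
  have hf'' : ∀ y, HasFDerivAt (fderiv ℝ f) (fderiv ℝ (fderiv ℝ f) y) y := fun y ↦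
    ((hf.fderiv_right (m := 1) le_rfl).differentiable one_ne_zero y).hasFDerivAt
  have hφ : ∀ t : ℝ, HasDerivAt (fun s ↦ f (x + s • v)) (fderiv ℝ f (x + t • v) v) t :=
    fun t ↦ (hf' _).comp_hasDerivAt t (hline t)
  have hφ' : ∀ t : ℝ, HasDerivAt (fun s ↦ fderiv ℝ f (x + s • v) v)
      (fderiv ℝ (fderiv ℝ f) (x + t • v) v v) t := fun t ↦
    (ContinuousLinearMap.apply ℝ ℝ v).hasFDerivAt.comp_hasDerivAt t
      ((hf'' _).comp_hasDerivAt t (hline t))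
  have hM : ∀ t : ℝ, fderiv ℝ (fderiv ℝ f) (x + t • v) v v ≤ K * ‖v‖ ^ 2 := fun t ↦ by
    set y := x + t • v
    have hnorm : ‖fderiv ℝ (fderiv ℝ f) y‖ = ‖iteratedFDeriv ℝ 2 f y‖ := by
      rw [← norm_iteratedFDeriv_one, norm_iteratedFDeriv_fderiv]
    calc fderiv ℝ (fderiv ℝ f) y v v ≤ ‖fderiv ℝ (fderiv ℝ f) y v v‖ := Real.le_norm_self _
      _ ≤ ‖fderiv ℝ (fderiv ℝ f) y‖ * ‖v‖ * ‖v‖ := ContinuousLinearMap.le_opNorm₂ _ _ _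
      _ ≤ K * ‖v‖ ^ 2 := by rw [hnorm, mul_assoc, ← sq]; gcongr; exact hK y
  have := le_add_mul_deriv_add_of_deriv2_le hφ hφ' hM zero_le_one
  simp only [one_smul, zero_smul, add_zero, one_mul, one_pow, mul_one] at this
  linarith

theorem sq_fderiv_apply_le_of_nonneg (hf : ContDiff ℝ 2 f) (hpos : ∀ x, 0 ≤ f x)
    (hK : ∀ x, ‖iteratedFDeriv ℝ 2 f x‖ ≤ K) (x v : E) :
    fderiv ℝ f x v ^ 2 ≤ 2 * K * f x * ‖v‖ ^ 2 := by
  have hquad : ∀ t : ℝ, 0 ≤ K / 2 * ‖v‖ ^ 2 * (t * t) + fderiv ℝ f x v * t + f x := fun t ↦ by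
    have := le_add_fderiv_add_of_norm_iteratedFDeriv_two_le hf hK x (t • v)
    rw [map_smul, smul_eq_mul, norm_smul, Real.norm_eq_abs, mul_pow, sq_abs] at this
    linarith [hpos (x + t • v)]
  have := discrim_le_zero hquad
  rw [discrim] at this
  linarith

theorem sqrt_le_sqrt_add_mul_norm_sub (hf : ContDiff ℝ 2 f) (hpos : ∀ x, 0 ≤ f x)
    (hK : ∀ x, ‖iteratedFDeriv ℝ 2 f x‖ ≤ K) (x y : E) :
    √(f y) ≤ √(f x) + √(K / 2) * ‖y - x‖ := by
  have hK0 : 0 ≤ K := (norm_nonneg _).trans (hK x)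
  set v := y - x
  set R := √(f x) + √(K / 2) * ‖v‖
  have hR : 0 ≤ R := by positivity
  have hsqrt : √(f x) ^ 2 = f x := Real.sq_sqrt (hpos x)
  have hsqrtK : √(K / 2) ^ 2 = K / 2 := Real.sq_sqrt (by positivity)
  have hgrad : fderiv ℝ f x v ≤ 2 * √(f x) * √(K / 2) * ‖v‖ := by
    have h := sq_fderiv_apply_le_of_nonneg hf hpos hK x v
    have : (2 * √(f x) * √(K / 2) * ‖v‖) ^ 2 = 2 * K * f x * ‖v‖ ^ 2 := by
      rw [mul_pow, mul_pow, mul_pow, hsqrt, hsqrtK]; ring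
    exact le_of_sq_le_sq (this ▸ h) (by positivity)
  have htaylor := le_add_fderiv_add_of_norm_iteratedFDeriv_two_le hf hK x v
  rw [add_sub_cancel] at htaylor
  refine Real.sqrt_le_iff.2 ⟨hR, ?_⟩
  calc f y ≤ f x + 2 * √(f x) * √(K / 2) * ‖v‖ + K / 2 * ‖v‖ ^ 2 := by linarith
    _ = R ^ 2 := by rw [add_sq, mul_pow, hsqrt, hsqrtK]; ring

end

theorem stmt_7_general (N : ℕ)
    (f : EuclideanSpace ℝ (Fin N) → ℝ)
    (hf : ContDiff ℝ 2 f) (hpos : ∀ x, 0 ≤ f x)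
    (K : ℝ) (hK : ∀ x, ‖iteratedFDeriv ℝ 2 f x‖ ≤ K) :
    ∀ x y : EuclideanSpace ℝ (Fin N),
      |Real.sqrt (f x) - Real.sqrt (f y)| ≤ Real.sqrt (K / 2) * ‖x - y‖ := by
  intro x y
  have hxy := sqrt_le_sqrt_add_mul_norm_sub hf hpos hK y x
  have hyx := sqrt_le_sqrt_add_mul_norm_sub hf hpos hK x y
  rw [norm_sub_rev] at hyx
  exact abs_sub_le_iff.2 ⟨by linarith, by linarith⟩

theorem stmt_7 (N : ℕ) (hN : 1 ≤ N)
    (f : EuclideanSpace ℝ (Fin N) → ℝ)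
    (hf : ContDiff ℝ 2 f) (hpos : ∀ x, 0 ≤ f x)
    (K : ℝ) (hK : ∀ x, ‖iteratedFDeriv ℝ 2 f x‖ ≤ K) :
    ∀ x y : EuclideanSpace ℝ (Fin N),
      |Real.sqrt (f x) - Real.sqrt (f y)| ≤ Real.sqrt (K / 2) * ‖x - y‖ :=
  stmt_7_general N f hf hpos K hK
end

section
/- Let 0 < η < 1, A ≥ 1, c, c' ∈ ℝ and μ ∈ [0, 1). Define f : [A, A/η] → ℝ by f(x) = c' + (c − c') · ln( A / (η x) ) / ln(1/η). If |f(x)| ≤ μ for all x ∈ [A, A/η], then ∫_A^{A/η} f'(x)² / (1 − f(x)²) dx ≤ (c − c')² / ( (1 − μ²) · ln²(1/η) · A ). -/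
/-!
Since `f` is affine in `log x`, its derivative is `-(c - c') / (log (1/η) · x)`. Bounding
`1 - f²` below by `1 - μ²` makes the integrand at most `K / x²` with
`K = (c - c')² / ((1 - μ²) log² (1/η))`, and `∫_A^∞ K / x² dx = K / A`.
-/

open MeasureTheory Set Filter Topology

lemma hasDerivAt_log_div_mul {a b x : ℝ} (ha : a ≠ 0) (hb : b ≠ 0) (hx : x ≠ 0) :
    HasDerivAt (fun y => Real.log (a / (b * y))) (-x⁻¹) x := by
  have h := ((hasDerivAt_inv hx).const_mul (a / b)).log
    (mul_ne_zero (div_ne_zero ha hb) (inv_ne_zero hx))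
  convert h using 1
  · funext y
    rw [div_mul_eq_div_div, div_eq_mul_inv (a / b)]
  · field_simp

lemma div_one_sub_sq_le_of_abs_le {p y μ : ℝ} (hp : 0 ≤ p) (hy : |y| ≤ μ) (hμ : μ < 1) :
    p / (1 - y ^ 2) ≤ p / (1 - μ ^ 2) := by
  have hsq : y ^ 2 ≤ μ ^ 2 := sq_abs y ▸ pow_le_pow_left₀ (abs_nonneg y) hy 2
  have hμ0 : 0 ≤ μ := (abs_nonneg y).trans hy
  exact div_le_div_of_nonneg_left hp (by nlinarith) (by linarith)

lemma lintegral_Ioi_ofReal_div_sq {K a : ℝ} (hK : 0 ≤ K) (ha : 0 < a) :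
    ∫⁻ x in Ioi a, ENNReal.ofReal (K / x ^ 2) = ENNReal.ofReal (K / a) := by
  have hderiv : ∀ x ∈ Ici a, HasDerivAt (fun x => -K * x⁻¹) (K / x ^ 2) x := fun x hx =>
    ((hasDerivAt_inv (ha.trans_le hx).ne').const_mul (-K)).congr_deriv (by ring)
  have hnonneg : ∀ x ∈ Ioi a, 0 ≤ K / x ^ 2 := fun x _ => by positivity
  have hlim : Tendsto (fun x : ℝ => -K * x⁻¹) atTop (𝓝 0) := by
    simpa using tendsto_inv_atTop_zero.const_mul (-K)
  rw [← ofReal_integral_eq_lintegral_ofReal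
      (integrableOn_Ioi_deriv_of_nonneg' hderiv hnonneg hlim)
      ((ae_restrict_iff' measurableSet_Ioi).2 (ae_of_all _ hnonneg)),
    integral_Ioi_of_hasDerivAt_of_nonneg' hderiv hnonneg hlim]
  congr 1
  ring

theorem stmt_11 (η A c c' μ : ℝ) (hη0 : 0 < η) (hη1 : η < 1) (hA : 1 ≤ A)
    (hμ0 : 0 ≤ μ) (hμ1 : μ < 1)
    (f : ℝ → ℝ)
    (hf : ∀ x : ℝ, f x = c' + (c - c') * Real.log (A / (η * x)) / Real.log (1 / η))
    (hbound : ∀ x ∈ Set.Icc A (A / η), |f x| ≤ μ) :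
    (∫⁻ x in Set.Icc A (A / η),
        ENNReal.ofReal ((deriv f x) ^ 2 / (1 - f x ^ 2))) ≤
      ENNReal.ofReal ((c - c') ^ 2 / ((1 - μ ^ 2) * Real.log (1 / η) ^ 2 * A)) := by
  set L := Real.log (1 / η)
  set K := (c - c') ^ 2 / ((1 - μ ^ 2) * L ^ 2)
  have hA0 : 0 < A := one_pos.trans_le hA
  have hL : L ≠ 0 := (Real.log_pos (one_lt_one_div hη0 hη1)).ne'
  have hμ : 0 < 1 - μ ^ 2 := by nlinarith
  have hK : 0 ≤ K := by positivity
  have hderiv : ∀ x ≠ 0, deriv f x = (c - c') * -x⁻¹ / L := fun x hx => by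
    rw [funext hf]
    exact (((hasDerivAt_log_div_mul hA0.ne' hη0.ne' hx).const_mul (c - c')).div_const L
      |>.const_add c').deriv
  have hpointwise : ∀ x ∈ Icc A (A / η),
      ENNReal.ofReal (deriv f x ^ 2 / (1 - f x ^ 2)) ≤ ENNReal.ofReal (K / x ^ 2) := by
    intro x hx
    have hx0 : x ≠ 0 := (hA0.trans_le hx.1).ne'
    refine ENNReal.ofReal_le_ofReal ?_
    calc deriv f x ^ 2 / (1 - f x ^ 2)
        ≤ deriv f x ^ 2 / (1 - μ ^ 2) :=
          div_one_sub_sq_le_of_abs_le (sq_nonneg _) (hbound x hx) hμ1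
      _ = K / x ^ 2 := by
          rw [hderiv x hx0]
          simp only [K]
          field_simp
  calc ∫⁻ x in Icc A (A / η), ENNReal.ofReal (deriv f x ^ 2 / (1 - f x ^ 2))
      ≤ ∫⁻ x in Icc A (A / η), ENNReal.ofReal (K / x ^ 2) :=
        setLIntegral_mono (by fun_prop) hpointwise
    _ ≤ ∫⁻ x in Ioi A, ENNReal.ofReal (K / x ^ 2) :=
        lintegral_mono_set' (Icc_subset_Ici_self.eventuallyLE.trans Ioi_ae_eq_Ici.symm.le)
    _ = ENNReal.ofReal (K / A) := lintegral_Ioi_ofReal_div_sq hK hA0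
    _ = ENNReal.ofReal ((c - c') ^ 2 / ((1 - μ ^ 2) * L ^ 2 * A)) := by
        rw [div_div]
end

section
/- Let a ∈ ℝ, θ ∈ ℝ, let g : (−1, 1) → ℝ be differentiable with |g(x₃)| ≤ 1/2 for all x₃, and let φ₀ : (−1, 1) → ℝ be differentiable. On D = (a, a+1) × (−1, 1) define m₃(x) = (1 + a − x₁) · g(x₃), φ(x) = (1 + a − x₁) · φ₀(x₃) + (x₁ − a) · θ, and (m₁, m₂)(x) = √(1 − m₃(x)²) · (cos φ(x), sin φ(x)). Also set M(x₃) = √(1 − g(x₃)²) · (cos φ₀(x₃), sin φ₀(x₃)). Then for every x = (x₁, x₃) ∈ D: (i) |∂_{x₁} m₃(x)|² ≤ g(x₃)²; (ii) |∂_{x₃} m₃(x)|² ≤ |g'(x₃)|²; (iii) |∂_{x₁}(m₁, m₂)(x)|² ≤ g(x₃)² + |φ₀(x₃) − θ|²; (iv) |∂_{x₃}(m₁, m₂)(x)|² ≤ 2 |M'(x₃)|². -/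
/-!
Writing the in-plane part as `ρ e^{iφ}` with `ρ = √(1 - m₃²)`, its squared derivative is
`ρ'² + ρ² φ'² = (m₃ m₃')² / (1 - m₃²) + (1 - m₃²) φ'²`. The interpolation factor
`1 + a - x₁` lies in `(0, 1)` and `|m₃| ≤ 1/2`, so `1 - m₃² ≥ 1/2`; the in-plane estimates then
reduce to elementary inequalities for this expression.
-/

open Real

/-- The squared derivative of `√(1 - m₃²) · (cos φ, sin φ)`, in terms of `m₃`, `m₃'` and `φ'`. -/
noncomputable def inPlaneDerivSq (m dm dφ : ℝ) : ℝ :=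
  (m * dm) ^ 2 / (1 - m ^ 2) + (1 - m ^ 2) * dφ ^ 2

theorem deriv_mul_cos_sq_add_deriv_mul_sin_sq {ρ φ : ℝ → ℝ} {ρ' φ' x : ℝ}
    (hρ : HasDerivAt ρ ρ' x) (hφ : HasDerivAt φ φ' x) :
    deriv (fun t => ρ t * cos (φ t)) x ^ 2 + deriv (fun t => ρ t * sin (φ t)) x ^ 2 =
      ρ' ^ 2 + ρ x ^ 2 * φ' ^ 2 := by
  have hcos : HasDerivAt (fun t => ρ t * cos (φ t))
      (ρ' * cos (φ x) + ρ x * (-sin (φ x) * φ')) x := hρ.mul hφ.cos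
  have hsin : HasDerivAt (fun t => ρ t * sin (φ t))
      (ρ' * sin (φ x) + ρ x * (cos (φ x) * φ')) x := hρ.mul hφ.sin
  rw [hcos.deriv, hsin.deriv]
  linear_combination (ρ' ^ 2 + ρ x ^ 2 * φ' ^ 2) * sin_sq_add_cos_sq (φ x)

theorem hasDerivAt_sqrt_one_sub_sq {u : ℝ → ℝ} {u' x : ℝ} (hu : HasDerivAt u u' x)
    (h : u x ^ 2 < 1) :
    HasDerivAt (fun t => √(1 - u t ^ 2)) (-(u x * u') / √(1 - u x ^ 2)) x := by
  have hpos : 0 < 1 - u x ^ 2 := sub_pos.mpr h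
  have hin : HasDerivAt (fun t => 1 - u t ^ 2) (-(2 * u x * u')) x := by
    simpa using (hu.pow 2).const_sub 1
  convert hin.sqrt hpos.ne' using 1
  field_simp

theorem deriv_sq_add_deriv_sq_eq_inPlaneDerivSq {u φ : ℝ → ℝ} {u' φ' x : ℝ}
    (hu : HasDerivAt u u' x) (hφ : HasDerivAt φ φ' x) (h : u x ^ 2 < 1) :
    deriv (fun t => √(1 - u t ^ 2) * cos (φ t)) x ^ 2 +
        deriv (fun t => √(1 - u t ^ 2) * sin (φ t)) x ^ 2 =
      inPlaneDerivSq (u x) u' φ' := by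
  have hpos : 0 < 1 - u x ^ 2 := sub_pos.mpr h
  rw [deriv_mul_cos_sq_add_deriv_mul_sin_sq (hasDerivAt_sqrt_one_sub_sq hu h) hφ,
    div_pow, neg_sq, sq_sqrt hpos.le, inPlaneDerivSq]

theorem inPlaneDerivSq_le_of_sq_le_half {m dm dφ : ℝ} (hm : m ^ 2 ≤ 1 / 2) :
    inPlaneDerivSq m dm dφ ≤ dm ^ 2 + dφ ^ 2 := by
  have hpos : 0 < 1 - m ^ 2 := by linarith
  have h₁ : (m * dm) ^ 2 / (1 - m ^ 2) ≤ dm ^ 2 := by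
    rw [div_le_iff₀ hpos, mul_pow]
    nlinarith [sq_nonneg dm]
  have h₂ : (1 - m ^ 2) * dφ ^ 2 ≤ dφ ^ 2 := by nlinarith [sq_nonneg m, sq_nonneg dφ]
  exact add_le_add h₁ h₂

theorem inPlaneDerivSq_mul_le_two_mul {r m dm dφ : ℝ} (hr : |r| ≤ 1) (hm : m ^ 2 ≤ 1 / 2) :
    inPlaneDerivSq (r * m) (r * dm) (r * dφ) ≤ 2 * inPlaneDerivSq m dm dφ := by
  have hr2 : r ^ 2 ≤ 1 := (sq_le_one_iff_abs_le_one r).mpr hr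
  have hpos : 0 < 1 - m ^ 2 := by linarith
  have hrm : (r * m) ^ 2 ≤ m ^ 2 := by
    rw [mul_pow]; nlinarith [sq_nonneg m]
  have h₁ : (r * m * (r * dm)) ^ 2 / (1 - (r * m) ^ 2) ≤ (m * dm) ^ 2 / (1 - m ^ 2) := by
    apply div_le_div₀ (sq_nonneg _) _ hpos (by linarith)
    have : (r * m * (r * dm)) ^ 2 = (r ^ 2) ^ 2 * (m * dm) ^ 2 := by ring
    rw [this]
    exact mul_le_of_le_one_left (sq_nonneg _) (pow_le_one₀ (sq_nonneg r) hr2)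
  -- `1 - m² ≥ 1/2` is where the factor 2 comes from.
  have h₂ : (1 - (r * m) ^ 2) * (r * dφ) ^ 2 ≤ 2 * ((1 - m ^ 2) * dφ ^ 2) := by
    rw [mul_pow]
    nlinarith [sq_nonneg (r * m), sq_nonneg dφ,
      mul_nonneg (sq_nonneg (r * m)) (sq_nonneg (r * dφ))]
  have h₀ : 0 ≤ (m * dm) ^ 2 / (1 - m ^ 2) := div_nonneg (sq_nonneg _) hpos.le
  unfold inPlaneDerivSq
  linarith

/-- Interpolation estimates for the glued profile on `D = (a, a+1) × (−1, 1)`: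
`m₃(x) = (1+a−x₁)·g(x₃)`, `φ(x) = (1+a−x₁)·φ₀(x₃) + (x₁−a)·θ`,
`(m₁,m₂)(x) = √(1−m₃(x)²)·(cos φ(x), sin φ(x))`,
`M(x₃) = √(1−g(x₃)²)·(cos φ₀(x₃), sin φ₀(x₃))`. -/
theorem stmt_13 (a θ : ℝ) (g φ₀ : ℝ → ℝ)
    (hg_diff : ∀ x₃ ∈ Set.Ioo (-1 : ℝ) 1, DifferentiableAt ℝ g x₃)
    (hg_bdd : ∀ x₃ ∈ Set.Ioo (-1 : ℝ) 1, |g x₃| ≤ 1 / 2)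
    (hφ_diff : ∀ x₃ ∈ Set.Ioo (-1 : ℝ) 1, DifferentiableAt ℝ φ₀ x₃)
    (x₁ x₃ : ℝ) (hx₁ : x₁ ∈ Set.Ioo a (a + 1)) (hx₃ : x₃ ∈ Set.Ioo (-1 : ℝ) 1) :
    (deriv (fun t => (1 + a - t) * g x₃) x₁) ^ 2 ≤ g x₃ ^ 2 ∧
    (deriv (fun s => (1 + a - x₁) * g s) x₃) ^ 2 ≤ (deriv g x₃) ^ 2 ∧
    (deriv (fun t => Real.sqrt (1 - ((1 + a - t) * g x₃) ^ 2) *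
        Real.cos ((1 + a - t) * φ₀ x₃ + (t - a) * θ)) x₁) ^ 2 +
      (deriv (fun t => Real.sqrt (1 - ((1 + a - t) * g x₃) ^ 2) *
        Real.sin ((1 + a - t) * φ₀ x₃ + (t - a) * θ)) x₁) ^ 2 ≤
      g x₃ ^ 2 + (φ₀ x₃ - θ) ^ 2 ∧
    (deriv (fun s => Real.sqrt (1 - ((1 + a - x₁) * g s) ^ 2) *
        Real.cos ((1 + a - x₁) * φ₀ s + (x₁ - a) * θ)) x₃) ^ 2 +
      (deriv (fun s => Real.sqrt (1 - ((1 + a - x₁) * g s) ^ 2) *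
        Real.sin ((1 + a - x₁) * φ₀ s + (x₁ - a) * θ)) x₃) ^ 2 ≤
      2 * ((deriv (fun s => Real.sqrt (1 - g s ^ 2) * Real.cos (φ₀ s)) x₃) ^ 2 +
        (deriv (fun s => Real.sqrt (1 - g s ^ 2) * Real.sin (φ₀ s)) x₃) ^ 2) := by
  obtain ⟨hx₁l, hx₁r⟩ := hx₁
  have hr : |1 + a - x₁| ≤ 1 := abs_le.mpr ⟨by linarith, by linarith⟩
  have hg : g x₃ ^ 2 ≤ 1 / 4 := by
    have := hg_bdd x₃ hx₃
    nlinarith [sq_abs (g x₃), abs_nonneg (g x₃)]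
  have hrg : ((1 + a - x₁) * g x₃) ^ 2 ≤ 1 / 4 := by
    rw [mul_pow]
    nlinarith [(sq_le_one_iff_abs_le_one _).mpr hr, sq_nonneg (g x₃)]
  have hg' := (hg_diff x₃ hx₃).hasDerivAt
  have hφ' := (hφ_diff x₃ hx₃).hasDerivAt
  have hu₁ : HasDerivAt (fun t => (1 + a - t) * g x₃) (-g x₃) x₁ := by
    simpa using ((hasDerivAt_id x₁).const_sub (1 + a)).mul_const (g x₃)
  have hφ₁ : HasDerivAt (fun t => (1 + a - t) * φ₀ x₃ + (t - a) * θ) (θ - φ₀ x₃) x₁ :=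
    ((((hasDerivAt_id' x₁).const_sub (1 + a)).mul_const (φ₀ x₃)).add
      (((hasDerivAt_id' x₁).sub_const a).mul_const θ)).congr_deriv (by ring)
  have hu₃ : HasDerivAt (fun s => (1 + a - x₁) * g s) ((1 + a - x₁) * deriv g x₃) x₃ :=
    hg'.const_mul _
  have hφ₃ : HasDerivAt (fun s => (1 + a - x₁) * φ₀ s + (x₁ - a) * θ)
      ((1 + a - x₁) * deriv φ₀ x₃) x₃ :=
    (hφ'.const_mul _).add_const _
  refine ⟨by rw [hu₁.deriv, neg_sq], ?_, ?_, ?_⟩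
  · rw [hu₃.deriv, mul_pow]
    exact mul_le_of_le_one_left (sq_nonneg _) ((sq_le_one_iff_abs_le_one _).mpr hr)
  · rw [deriv_sq_add_deriv_sq_eq_inPlaneDerivSq hu₁ hφ₁ (by linarith), sub_sq_comm (φ₀ x₃) θ,
      ← neg_sq (g x₃)]
    exact inPlaneDerivSq_le_of_sq_le_half (by linarith)
  · rw [deriv_sq_add_deriv_sq_eq_inPlaneDerivSq hu₃ hφ₃ (by linarith),
      deriv_sq_add_deriv_sq_eq_inPlaneDerivSq hg' hφ' (by linarith)]
    exact inPlaneDerivSq_mul_le_two_mul hr (by linarith)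
end

section
/- Define m₁ : ℝ → ℝ by m₁(x) = cos(πx/3) for |x| ≤ 1 and m₁(x) = 1 − |x|/(1 + x²) for |x| > 1. Then m₁ is continuous with |m₁(x)| < 1 for x ≠ 0, m₁ is differentiable off a finite set, and: (i) ∫_ℝ m₁'(x)² / (1 − m₁(x)²) dx < ∞, whereas (ii) ∫_ℝ ( 1 − m₁(x)² ) dx = ∞. -/
/-!
On `|x| ≤ 1` we have `1 - m₁² = sin²(πx/3)`, which cancels against `m₁'² = (π/3)² sin²(πx/3)`, so
the exchange density is the constant `(π/3)²` there. On the tails `m₁ = 1 - s` with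
`s = |x|/(1 + x²) ~ 1/|x|`, so `1 - m₁² ≥ s` is of order `1/|x|` (not integrable), while
`m₁'² = O(x⁻⁴)` makes the exchange density `O(x⁻²)`. Since `m₁` is even, it suffices to look at
`x ≥ 0`.
-/

open MeasureTheory Real Set

noncomputable def profile (x : ℝ) : ℝ :=
  if |x| ≤ 1 then cos (π * x / 3) else 1 - |x| / (1 + x ^ 2)

lemma profile_of_abs_le {x : ℝ} (h : |x| ≤ 1) : profile x = cos (π * x / 3) := if_pos h

lemma profile_of_one_lt {x : ℝ} (h : 1 < x) : profile x = 1 - x / (1 + x ^ 2) := by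
  rw [profile, if_neg (by rw [abs_of_pos (by linarith)]; linarith), abs_of_pos (by linarith)]

lemma profile_neg (x : ℝ) : profile (-x) = profile x := by
  simp only [profile, abs_neg, neg_sq, mul_neg, neg_div, cos_neg]

lemma continuous_profile : Continuous profile := by
  refine Continuous.if_le (by fun_prop) ?_ continuous_abs continuous_const ?_
  · exact continuous_const.sub
      (continuous_abs.div (by fun_prop) fun x => (by positivity : (0 : ℝ) < 1 + x ^ 2).ne')
  · intro x hx
    rw [← cos_abs, abs_div, abs_mul, abs_of_pos pi_pos, hx, ← sq_abs, hx]
    norm_num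

lemma div_one_add_sq_le_half (x : ℝ) : x / (1 + x ^ 2) ≤ 1 / 2 := by
  rw [div_le_iff₀ (by positivity)]
  nlinarith [sq_nonneg (x - 1)]

lemma le_one_sub_one_sub_sq {s : ℝ} (h₀ : 0 ≤ s) (h₁ : s ≤ 1) : s ≤ 1 - (1 - s) ^ 2 := by
  nlinarith

lemma profile_mem_Ioo {x : ℝ} (hx : x ≠ 0) : profile x ∈ Ioo 0 1 := by
  wlog hpos : 0 < x generalizing x
  · simpa only [profile_neg] using
      this (neg_ne_zero.mpr hx) (neg_pos.mpr ((not_lt.mp hpos).lt_of_ne hx))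
  rcases le_or_gt x 1 with h | h
  · rw [profile_of_abs_le (by rw [abs_of_pos hpos]; exact h)]
    have hθ : 0 < π * x / 3 := by positivity
    have hθ' : π * x / 3 < π / 2 := by nlinarith [pi_pos]
    refine ⟨cos_pos_of_mem_Ioo ⟨by linarith, hθ'⟩, lt_of_le_of_ne (cos_le_one _) ?_⟩
    rw [Ne, cos_eq_one_iff_of_lt_of_lt (by linarith [pi_pos]) (by linarith [pi_pos])]
    exact hθ.ne'
  · rw [profile_of_one_lt h]
    have := div_one_add_sq_le_half x
    have : 0 < x / (1 + x ^ 2) := by positivity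
    constructor <;> linarith

lemma hasDerivAt_profile_of_abs_lt {x : ℝ} (h : |x| < 1) :
    HasDerivAt profile (-sin (π * x / 3) * (π / 3)) x := by
  have hcos : HasDerivAt (fun y => cos (π * y / 3)) (-sin (π * x / 3) * (π / 3)) x :=
    ((hasDerivAt_id' x).const_mul π |>.div_const 3 |>.cos).congr_deriv (by simp)
  refine hcos.congr_of_eventuallyEq ?_
  filter_upwards [(isOpen_lt continuous_abs continuous_const).mem_nhds h] with y hy
  exact profile_of_abs_le (le_of_lt hy)

lemma hasDerivAt_profile_of_one_lt {x : ℝ} (h : 1 < x) :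
    HasDerivAt profile ((x ^ 2 - 1) / (1 + x ^ 2) ^ 2) x := by
  have hrat : HasDerivAt (fun y => 1 - y / (1 + y ^ 2)) ((x ^ 2 - 1) / (1 + x ^ 2) ^ 2) x := by
    refine ((hasDerivAt_id' x).div ((hasDerivAt_pow 2 x).const_add 1)
      (by positivity)).const_sub 1 |>.congr_deriv ?_
    field_simp
    ring
  refine hrat.congr_of_eventuallyEq ?_
  filter_upwards [lt_mem_nhds h] with y hy
  exact profile_of_one_lt hy

lemma differentiableAt_profile {x : ℝ} (h₁ : x ≠ -1) (h₂ : x ≠ 1) :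
    DifferentiableAt ℝ profile x := by
  wlog hpos : 0 ≤ x generalizing x
  · have := this (x := -x) (by contrapose! h₂; linarith) (by contrapose! h₁; linarith) (by linarith)
    simpa only [profile_neg] using differentiableAt_comp_neg.mpr this
  rcases lt_or_gt_of_ne h₂ with h | h
  · exact (hasDerivAt_profile_of_abs_lt (by rw [abs_of_nonneg hpos]; exact h)).differentiableAt
  · exact (hasDerivAt_profile_of_one_lt h).differentiableAt

lemma deriv_profile_neg (x : ℝ) : deriv profile (-x) = -deriv profile x := by
  have := deriv_comp_neg (f := profile) (x := x)
  simp only [profile_neg] at this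
  rw [this, neg_neg]

noncomputable def exchangeDensity (f : ℝ → ℝ) (x : ℝ) : ℝ := deriv f x ^ 2 / (1 - f x ^ 2)

lemma exchangeDensity_profile_neg (x : ℝ) :
    exchangeDensity profile (-x) = exchangeDensity profile x := by
  rw [exchangeDensity, exchangeDensity, deriv_profile_neg, profile_neg, neg_sq]

lemma tail_density_le {x : ℝ} (h : 1 < x) :
    ((x ^ 2 - 1) / (1 + x ^ 2) ^ 2) ^ 2 / (1 - (1 - x / (1 + x ^ 2)) ^ 2) ≤ 3 / (1 + x ^ 2) := by
  have hx : 0 < x := by linarith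
  have hs : 0 < x / (1 + x ^ 2) := by positivity
  calc _ ≤ ((x ^ 2 - 1) / (1 + x ^ 2) ^ 2) ^ 2 / (x / (1 + x ^ 2)) :=
        div_le_div_of_nonneg_left (sq_nonneg _) hs
          (le_one_sub_one_sub_sq hs.le ((div_one_add_sq_le_half x).trans (by norm_num)))
    _ ≤ 3 / (1 + x ^ 2) := by
        rw [div_pow, div_div_eq_mul_div, div_le_div_iff₀ (by positivity) (by positivity)]
        field_simp
        nlinarith [sq_nonneg (x ^ 2 - 1), pow_pos hx 3]

lemma exchangeDensity_profile_le {x : ℝ} (h₁ : x ≠ -1) (h₂ : x ≠ 1) :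
    exchangeDensity profile x ≤ 3 / (1 + x ^ 2) := by
  wlog hpos : 0 ≤ x generalizing x
  · have := this (x := -x) (by contrapose! h₂; linarith) (by contrapose! h₁; linarith) (by linarith)
    rwa [exchangeDensity_profile_neg, neg_sq] at this
  rcases hpos.eq_or_lt with rfl | hx
  · -- `1 - profile 0 ^ 2 = 0`, and division by zero is `0`
    have : profile 0 = 1 := by simp [profile_of_abs_le]
    simp only [exchangeDensity, this]
    norm_num
  rcases lt_or_gt_of_ne h₂ with h | h
  · have habs : |x| < 1 := by rwa [abs_of_pos hx]
    have hsin : sin (π * x / 3) ^ 2 ≠ 0 := by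
      have := profile_mem_Ioo hx.ne'
      rw [profile_of_abs_le habs.le] at this
      nlinarith [sin_sq_add_cos_sq (π * x / 3), this.1, this.2]
    rw [exchangeDensity, (hasDerivAt_profile_of_abs_lt habs).deriv, profile_of_abs_le habs.le,
      ← sin_sq, mul_pow, neg_sq, mul_div_cancel_left₀ _ hsin, div_pow,
      div_le_div_iff₀ (by norm_num) (by positivity)]
    have hx2 : x ^ 2 < 1 := by nlinarith
    have hπ2 : π ^ 2 < 10 := by nlinarith [pi_pos, pi_lt_d2]
    nlinarith
  · rw [exchangeDensity, (hasDerivAt_profile_of_one_lt h).deriv, profile_of_one_lt h]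
    exact tail_density_le h

lemma lintegral_exchangeDensity_profile_lt_top :
    ∫⁻ x, ENNReal.ofReal (exchangeDensity profile x) < ⊤ := by
  have hae : ∀ᵐ x : ℝ, ENNReal.ofReal (exchangeDensity profile x)
      ≤ ENNReal.ofReal (3 / (1 + x ^ 2)) := by
    filter_upwards [(Set.toFinite {-1, 1}).countable.ae_notMem volume] with x hx
    simp only [mem_insert_iff, mem_singleton_iff, not_or] at hx
    exact ENNReal.ofReal_le_ofReal (exchangeDensity_profile_le hx.1 hx.2)
  refine (lintegral_mono_ae hae).trans_lt (Integrable.lintegral_lt_top ?_)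
  simpa only [div_eq_mul_inv] using integrable_inv_one_add_sq.const_mul 3

lemma lintegral_ofReal_eq_top_of_mul_inv_le {g : ℝ → ℝ} {a c : ℝ} (ha : 0 ≤ a) (hc : 0 < c)
    (hg : ∀ x, a < x → c * x⁻¹ ≤ g x) : ∫⁻ x, ENNReal.ofReal (g x) = ⊤ := by
  by_contra hfin
  have hpos : ∀ᵐ x ∂volume.restrict (Ioi a), 0 ≤ c * x⁻¹ := by
    filter_upwards [ae_restrict_mem measurableSet_Ioi] with x (hx : a < x)
    have : 0 < x := ha.trans_lt hx
    positivity
  have hint : IntegrableOn (fun x => c * x⁻¹) (Ioi a) := by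
    refine ⟨by fun_prop, (hasFiniteIntegral_iff_ofReal hpos).mpr ?_⟩
    calc ∫⁻ x in Ioi a, ENNReal.ofReal (c * x⁻¹)
        ≤ ∫⁻ x in Ioi a, ENNReal.ofReal (g x) :=
          setLIntegral_mono' measurableSet_Ioi fun x hx => ENNReal.ofReal_le_ofReal (hg x hx)
      _ ≤ ∫⁻ x, ENNReal.ofReal (g x) := setLIntegral_le_lintegral _ _
      _ < ⊤ := lt_top_iff_ne_top.mpr hfin
  have hinv : IntegrableOn (fun x => c⁻¹ * (c * x⁻¹)) (Ioi a) := hint.const_mul c⁻¹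
  simp only [← mul_assoc, inv_mul_cancel₀ hc.ne', one_mul] at hinv
  exact not_integrableOn_Ioi_inv hinv

lemma inv_two_mul_inv_le_one_sub_profile_sq {x : ℝ} (h : 1 < x) :
    2⁻¹ * x⁻¹ ≤ 1 - profile x ^ 2 := by
  have hx : 0 < x := by linarith
  have hs : 0 < x / (1 + x ^ 2) := by positivity
  rw [profile_of_one_lt h]
  calc 2⁻¹ * x⁻¹ ≤ x / (1 + x ^ 2) := by
        rw [← mul_inv, inv_eq_one_div, div_le_div_iff₀ (by positivity) (by positivity)]
        nlinarith
    _ ≤ _ := le_one_sub_one_sub_sq hs.le ((div_one_add_sq_le_half x).trans (by norm_num))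

theorem stmt_14 (m₁ : ℝ → ℝ)
    (hm : ∀ x : ℝ, m₁ x =
      if |x| ≤ 1 then Real.cos (Real.pi * x / 3) else 1 - |x| / (1 + x ^ 2)) :
    Continuous m₁ ∧
    (∀ x : ℝ, x ≠ 0 → |m₁ x| < 1) ∧
    (∃ S : Finset ℝ, ∀ x ∉ (S : Set ℝ), DifferentiableAt ℝ m₁ x) ∧
    (∫⁻ x : ℝ, ENNReal.ofReal ((deriv m₁ x) ^ 2 / (1 - m₁ x ^ 2))) < ⊤ ∧
    (∫⁻ x : ℝ, ENNReal.ofReal (1 - m₁ x ^ 2)) = ⊤ := by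
  obtain rfl : m₁ = profile := funext hm
  refine ⟨continuous_profile, fun x hx => ?_, ⟨{-1, 1}, fun x hx => ?_⟩,
    lintegral_exchangeDensity_profile_lt_top,
    lintegral_ofReal_eq_top_of_mul_inv_le zero_le_one (by norm_num)
      fun x hx => inv_two_mul_inv_le_one_sub_profile_sq hx⟩
  · obtain ⟨h₀, h₁⟩ := profile_mem_Ioo hx
    exact abs_lt.mpr ⟨by linarith, h₁⟩
  · simp only [Finset.coe_insert, Finset.coe_singleton, mem_insert_iff, mem_singleton_iff,
      not_or] at hx
    exact differentiableAt_profile hx.1 hx.2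
end

section
/- Let α ∈ (0, π/2], set c = cos α and β = 1 − c, let 0 < η ≤ 1/2 and L = ln(1/η). Define f : ℝ → ℝ by f(x) = 1 − (β ln 2 / (4L)) x² for |x| ≤ 2, f(x) = c + β · ln(1/(η|x|)) / L for 2 ≤ |x| ≤ 1/η, and f(x) = c for |x| ≥ 1/η. Then f is continuous, c ≤ f(x) ≤ 1 for all x with f(x) < 1 for x ≠ 0, and ∫_ℝ f'(x)² / (1 − f(x)²) dx ≤ 4 β / L, where f' is the a.e. derivative of f. -/
/-!
Write `L = log (1 / η)`. The profile is `f = 1 - (1 - cos α) φ` for a shape `φ` with values in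
`[0, 1]` that does not depend on `α`. For `0 ≤ f ≤ 1` we have `1 - f² ≥ 1 - f`, so the exchange
density `f'² / (1 - f²)` is at most `(1 - cos α) φ'² / φ`. This is `log 2 / L` on `|x| < 2`,
`1 / (L x² log |x|)` on `2 < |x| < 1 / η` and `0` beyond, so its integral is at most
`(4 log 2 + 3 / (4 log 2)) / L ≤ 4 / L`.
-/

open MeasureTheory Set Real Filter Topology

theorem lintegral_comp_abs (F : ℝ → ENNReal) :
    ∫⁻ x, F |x| = 2 * ∫⁻ x in Ioi 0, F x := by
  have hpos : ∫⁻ x in Ioi 0, F |x| = ∫⁻ x in Ioi 0, F x :=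
    setLIntegral_congr_fun measurableSet_Ioi fun x hx => by rw [abs_of_pos hx]
  have hneg : ∫⁻ x in Iic 0, F |x| = ∫⁻ x in Ioi 0, F x :=
    calc ∫⁻ x in Iic 0, F |x| = ∫⁻ x in Neg.neg ⁻¹' Ici 0, F |-x| := by
          rw [neg_preimage, neg_Ici, neg_zero]
          exact setLIntegral_congr_fun measurableSet_Iic fun x _ => by rw [abs_neg]
      _ = ∫⁻ x in Ici 0, F |x| :=
          (Measure.measurePreserving_neg volume).setLIntegral_comp_preimage_emb
            measurableEmbedding_neg (fun x => F |x|) _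
      _ = ∫⁻ x in Ioi 0, F x := by rw [setLIntegral_congr Ioi_ae_eq_Ici.symm, hpos]
  rw [← setLIntegral_univ, ← Iic_union_Ioi (a := (0 : ℝ)),
    lintegral_union measurableSet_Ioi (Iic_disjoint_Ioi le_rfl), hneg, hpos, two_mul]

theorem ae_abs_ne (r : ℝ) : ∀ᵐ x : ℝ, |x| ≠ r := by
  filter_upwards [(toFinite {r, -r}).countable.ae_notMem volume] with x hx h
  exact hx (eq_or_eq_neg_of_abs_eq h)

theorem lintegral_Ioi_div_sq {C r : ℝ} (hC : 0 ≤ C) (hr : 0 < r) :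
    ∫⁻ t in Ioi r, ENNReal.ofReal (C / t ^ 2) = ENNReal.ofReal (C / r) := by
  have hderiv : ∀ t ∈ Ici r, HasDerivAt (fun t => -(C / t)) (C / t ^ 2) t := fun t ht => by
    simpa [div_eq_mul_inv] using
      ((hasDerivAt_inv (hr.trans_le ht).ne').const_mul C).fun_neg
  have hnonneg : ∀ t ∈ Ioi r, 0 ≤ C / t ^ 2 := fun t _ => by positivity
  have hlim : Tendsto (fun t : ℝ => -(C / t)) atTop (𝓝 0) := by
    simpa using ((tendsto_const_nhds (x := C)).div_atTop (tendsto_id (α := ℝ))).neg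
  rw [← ofReal_integral_eq_lintegral_ofReal
      (integrableOn_Ioi_deriv_of_nonneg' hderiv hnonneg hlim)
      ((ae_restrict_iff' measurableSet_Ioi).2 (Eventually.of_forall hnonneg)),
    integral_Ioi_of_hasDerivAt_of_nonneg' hderiv hnonneg hlim, zero_sub, neg_neg]

theorem lintegral_Ioc_div_sq {C r s : ℝ} (hC : 0 ≤ C) (hr : 0 < r) (hrs : r ≤ s) :
    ∫⁻ t in Ioc r s, ENNReal.ofReal (C / t ^ 2) = ENNReal.ofReal (C / r - C / s) := by
  have hs : 0 < s := hr.trans_le hrs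
  have hsplit := lintegral_union (μ := volume) (f := fun t => ENNReal.ofReal (C / t ^ 2))
    measurableSet_Ioi (Ioc_disjoint_Ioi_same (a := r) (b := s))
  rw [Ioc_union_Ioi_eq_Ioi hrs, lintegral_Ioi_div_sq hC hr, lintegral_Ioi_div_sq hC hs]
    at hsplit
  rw [ENNReal.ofReal_sub _ (by positivity), hsplit,
    ENNReal.add_sub_cancel_right ENNReal.ofReal_ne_top]

theorem sq_div_one_sub_one_sub_mul_sq_le {β s d : ℝ} (hβ : 0 ≤ β) (hs : 0 ≤ s)
    (hβs : β * s ≤ 1) : (β * d) ^ 2 / (1 - (1 - β * s) ^ 2) ≤ β * (d ^ 2 / s) := by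
  rcases (mul_nonneg hβ hs).eq_or_lt with h0 | h0
  · rw [← h0, sub_zero, one_pow, sub_self, div_zero]
    positivity
  have hle : β * s ≤ 1 - (1 - β * s) ^ 2 := by nlinarith
  have hβ0 : β ≠ 0 := left_ne_zero_of_mul h0.ne'
  have hs0 : s ≠ 0 := right_ne_zero_of_mul h0.ne'
  calc (β * d) ^ 2 / (1 - (1 - β * s) ^ 2) ≤ (β * d) ^ 2 / (β * s) :=
        div_le_div_of_nonneg_left (sq_nonneg _) h0 hle
    _ = β * (d ^ 2 / s) := by field_simp

theorem lintegral_exchange_one_sub_mul_le {φ : ℝ → ℝ} {β : ℝ} (hβ : 0 ≤ β)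
    (hφ : ∀ x, 0 ≤ φ x) (hβφ : ∀ x, β * φ x ≤ 1) :
    ∫⁻ x, ENNReal.ofReal (deriv (fun y => 1 - β * φ y) x ^ 2 / (1 - (1 - β * φ x) ^ 2)) ≤
      ENNReal.ofReal β * ∫⁻ x, ENNReal.ofReal (deriv φ x ^ 2 / φ x) := by
  rw [← lintegral_const_mul' _ _ ENNReal.ofReal_ne_top]
  refine lintegral_mono fun x => ?_
  rw [← ENNReal.ofReal_mul hβ, deriv_const_sub, deriv_const_mul_field, neg_sq]
  exact ENNReal.ofReal_le_ofReal (sq_div_one_sub_one_sub_mul_sq_le hβ (hφ x) (hβφ x))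

theorem four_mul_log_two_add_three_div_le : 4 * log 2 + 3 / (4 * log 2) ≤ 4 := by
  have h1 := log_two_gt_d9
  have h2 := log_two_lt_d9
  have hfactor : 4 - (4 * log 2 + 3 / (4 * log 2)) =
      (4 * log 2 - 1) * (3 - 4 * log 2) / (4 * log 2) := by
    field_simp
    ring
  rw [← sub_nonneg, hfactor]
  apply div_nonneg <;> nlinarith

noncomputable def neelShape (η x : ℝ) : ℝ :=
  if |x| ≤ 2 then log 2 / (4 * log (1 / η)) * x ^ 2
  else if |x| ≤ 1 / η then log |x| / log (1 / η)
  else 1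

namespace neelShape

variable {η x : ℝ}

theorem of_abs_le_two (hx : |x| ≤ 2) : neelShape η x = log 2 / (4 * log (1 / η)) * x ^ 2 :=
  if_pos hx

theorem of_two_lt_abs (h2 : 2 < |x|) (hη : |x| ≤ 1 / η) :
    neelShape η x = log |x| / log (1 / η) := by
  rw [neelShape, if_neg h2.not_ge, if_pos hη]

theorem of_inv_lt_abs (hη : 2 ≤ 1 / η) (h : 1 / η < |x|) : neelShape η x = 1 := by
  rw [neelShape, if_neg (hη.trans_lt h).not_ge, if_neg h.not_ge]

theorem eq_clamp (hη : 2 ≤ 1 / η) (x : ℝ) : neelShape η x =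
    if |x| ≤ 2 then log 2 / (4 * log (1 / η)) * x ^ 2
    else log (min (max |x| 2) (1 / η)) / log (1 / η) := by
  rcases le_or_gt |x| 2 with h2 | h2
  · rw [of_abs_le_two h2, if_pos h2]
  rw [if_neg h2.not_ge]
  rcases le_or_gt |x| (1 / η) with h | h
  · rw [of_two_lt_abs h2 h, max_eq_left h2.le, min_eq_left h]
  · rw [of_inv_lt_abs hη h, max_eq_left h2.le, min_eq_right h.le,
      div_self (log_pos (one_lt_two.trans_le hη)).ne']

theorem continuous (hη : 2 ≤ 1 / η) : Continuous (neelShape η) := by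
  rw [funext (eq_clamp hη)]
  refine Continuous.if_le (by fun_prop) ?_ continuous_abs continuous_const fun x hx => ?_
  · exact (((continuous_abs.max continuous_const).min continuous_const).log fun x =>
      (two_pos.trans_le (le_min (le_max_right _ _) hη)).ne').div_const _
  · have hL := (log_pos (one_lt_two.trans_le hη)).ne'
    rw [← sq_abs, hx, max_self, min_eq_left hη]
    field_simp
    norm_num

theorem mem_Icc (hη : 2 ≤ 1 / η) (x : ℝ) : neelShape η x ∈ Icc 0 1 := by
  have hL := log_pos (one_lt_two.trans_le hη)
  rw [eq_clamp hη]
  split_ifs with h2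
  · have : x ^ 2 ≤ 4 := by nlinarith [sq_abs x, abs_nonneg x]
    refine ⟨by positivity, ?_⟩
    calc log 2 / (4 * log (1 / η)) * x ^ 2 ≤ log 2 / (4 * log (1 / η)) * 4 := by gcongr
      _ = log 2 / log (1 / η) := by field_simp
      _ ≤ 1 := (div_le_one hL).2 (log_le_log two_pos hη)
  · have h2m : 2 ≤ min (max |x| 2) (1 / η) := le_min (le_max_right _ _) hη
    exact ⟨div_nonneg (log_nonneg (by linarith)) hL.le,
      (div_le_one hL).2 (log_le_log (by linarith) (min_le_right _ _))⟩

theorem pos (hη : 2 ≤ 1 / η) (hx : x ≠ 0) : 0 < neelShape η x := by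
  have hL := log_pos (one_lt_two.trans_le hη)
  rw [eq_clamp hη]
  split_ifs with h2
  · have := log_pos one_lt_two
    positivity
  · have h2m : 2 ≤ min (max |x| 2) (1 / η) := le_min (le_max_right _ _) hη
    exact div_pos (log_pos (by linarith)) hL

theorem hasDerivAt_of_abs_lt_two (hx : |x| < 2) :
    HasDerivAt (neelShape η) (log 2 / (2 * log (1 / η)) * x) x := by
  have hev : neelShape η =ᶠ[𝓝 x] fun y => log 2 / (4 * log (1 / η)) * y ^ 2 := by
    filter_upwards [(isOpen_lt continuous_abs continuous_const).mem_nhds hx] with y hy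
    exact of_abs_le_two hy.le
  refine (((hasDerivAt_pow 2 x).const_mul _).congr_of_eventuallyEq hev).congr_deriv ?_
  field_simp
  ring

theorem hasDerivAt_of_two_lt_abs (h2 : 2 < |x|) (hη : |x| < 1 / η) :
    HasDerivAt (neelShape η) (x⁻¹ / log (1 / η)) x := by
  have hev : neelShape η =ᶠ[𝓝 x] fun y => log y / log (1 / η) := by
    filter_upwards [((isOpen_lt continuous_const continuous_abs).inter
      (isOpen_lt continuous_abs continuous_const)).mem_nhds ⟨h2, hη⟩] with y hy
    rw [of_two_lt_abs hy.1 hy.2.le, log_abs]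
  exact ((hasDerivAt_log (abs_pos.1 (two_pos.trans h2))).div_const _).congr_of_eventuallyEq hev

theorem hasDerivAt_of_inv_lt_abs (hη : 2 ≤ 1 / η) (h : 1 / η < |x|) :
    HasDerivAt (neelShape η) 0 x := by
  have hev : neelShape η =ᶠ[𝓝 x] fun _ => 1 := by
    filter_upwards [(isOpen_lt continuous_const continuous_abs).mem_nhds h] with y hy
    exact of_inv_lt_abs hη hy
  exact (hasDerivAt_const x 1).congr_of_eventuallyEq hev

/-- On `2 < t ≤ 4` this uses `log t ≥ log 2` and beyond `4` it uses `log t ≥ 2 log 2`: a single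
cut-off at `2` would only give the constant `4 log 2 + 1 / log 2 > 4` in the final estimate. -/
noncomputable def energyBound (L t : ℝ) : ℝ :=
  if t ≤ 2 then log 2 / L
  else if t ≤ 4 then (L * log 2)⁻¹ / t ^ 2
  else (2 * L * log 2)⁻¹ / t ^ 2

theorem energyBound_nonneg {L : ℝ} (hL : 0 ≤ L) (t : ℝ) : 0 ≤ energyBound L t := by
  have := log_pos one_lt_two
  unfold energyBound
  split_ifs <;> positivity

theorem energy_le (hη : 2 ≤ 1 / η) (h2 : |x| ≠ 2) (hη' : |x| ≠ 1 / η) :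
    deriv (neelShape η) x ^ 2 / neelShape η x ≤ energyBound (log (1 / η)) |x| := by
  have hL := log_pos (one_lt_two.trans_le hη)
  have hl := log_pos one_lt_two
  rcases h2.lt_or_gt with h2 | h2
  · rw [(hasDerivAt_of_abs_lt_two h2).deriv, of_abs_le_two h2.le, energyBound, if_pos h2.le]
    refine div_le_of_le_mul₀ (by positivity) (by positivity) (le_of_eq ?_)
    field_simp
    ring
  rcases hη'.lt_or_gt with hη' | hη'
  · have hlog (m : ℝ) (hm : 0 < m) (hmx : m ≤ log |x|) :
        deriv (neelShape η) x ^ 2 / neelShape η x ≤ (log (1 / η) * m)⁻¹ / |x| ^ 2 := by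
      have hx : x ≠ 0 := abs_pos.1 (two_pos.trans h2)
      rw [(hasDerivAt_of_two_lt_abs h2 hη').deriv, of_two_lt_abs h2 hη'.le]
      calc (x⁻¹ / log (1 / η)) ^ 2 / (log |x| / log (1 / η))
          = (log (1 / η) * log |x|)⁻¹ / |x| ^ 2 := by
            rw [sq_abs]
            field_simp
        _ ≤ (log (1 / η) * m)⁻¹ / |x| ^ 2 := by gcongr
    rw [energyBound, if_neg h2.not_ge]
    split_ifs with h4
    · exact hlog _ hl (log_le_log two_pos h2.le)
    · rw [mul_comm 2, mul_assoc]
      refine hlog _ (by positivity) ?_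
      rw [← log_rpow two_pos]
      exact log_le_log (by positivity) (by norm_num; linarith)
  · rw [(hasDerivAt_of_inv_lt_abs hη hη').deriv]
    simpa using energyBound_nonneg hL.le |x|

theorem lintegral_energyBound_abs {L : ℝ} (hL : 0 < L) :
    ∫⁻ x, ENNReal.ofReal (energyBound L |x|) =
      ENNReal.ofReal ((4 * log 2 + 3 / (4 * log 2)) / L) := by
  have hl := log_pos one_lt_two
  have hsplit : Ioi (0 : ℝ) = (Ioc 0 2 ∪ Ioc 2 4) ∪ Ioi 4 := by
    rw [Ioc_union_Ioc_eq_Ioc (by norm_num) (by norm_num), Ioc_union_Ioi_eq_Ioi (by norm_num)]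
  have hdisj : Disjoint (Ioc (0 : ℝ) 2 ∪ Ioc 2 4) (Ioi 4) := by
    rw [Ioc_union_Ioc_eq_Ioc (by norm_num) (by norm_num)]
    exact Ioc_disjoint_Ioi_same
  have h1 : ∫⁻ t in Ioc 0 2, ENNReal.ofReal (energyBound L t) =
      ENNReal.ofReal (2 * (log 2 / L)) := by
    rw [setLIntegral_congr_fun measurableSet_Ioc fun t ht => by rw [energyBound, if_pos ht.2],
      setLIntegral_const, Real.volume_Ioc, ← ENNReal.ofReal_mul (by positivity)]
    norm_num [mul_comm]
  have h2 : ∫⁻ t in Ioc 2 4, ENNReal.ofReal (energyBound L t) =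
      ENNReal.ofReal ((L * log 2)⁻¹ / 4) := by
    rw [setLIntegral_congr_fun measurableSet_Ioc fun t ht => by
        rw [energyBound, if_neg ht.1.not_ge, if_pos ht.2],
      lintegral_Ioc_div_sq (by positivity) two_pos (by norm_num)]
    ring_nf
  have h3 : ∫⁻ t in Ioi 4, ENNReal.ofReal (energyBound L t) =
      ENNReal.ofReal ((2 * L * log 2)⁻¹ / 4) := by
    rw [setLIntegral_congr_fun measurableSet_Ioi fun t ht => by
        rw [energyBound, if_neg (by linarith [ht.out]), if_neg (not_le.2 ht)],
      lintegral_Ioi_div_sq (by positivity) four_pos]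
  rw [lintegral_comp_abs fun t => ENNReal.ofReal (energyBound L t), hsplit,
    lintegral_union measurableSet_Ioi hdisj,
    lintegral_union measurableSet_Ioc (Ioc_disjoint_Ioc_of_le le_rfl), h1, h2, h3,
    ← ENNReal.ofReal_add (by positivity) (by positivity),
    ← ENNReal.ofReal_add (by positivity) (by positivity),
    ← ENNReal.ofReal_ofNat 2, ← ENNReal.ofReal_mul zero_le_two]
  congr 1
  field_simp
  ring

theorem lintegral_energy_le (hη : 2 ≤ 1 / η) :
    ∫⁻ x, ENNReal.ofReal (deriv (neelShape η) x ^ 2 / neelShape η x) ≤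
      ENNReal.ofReal (4 / log (1 / η)) := by
  have hL := log_pos (one_lt_two.trans_le hη)
  calc ∫⁻ x, ENNReal.ofReal (deriv (neelShape η) x ^ 2 / neelShape η x)
      ≤ ∫⁻ x, ENNReal.ofReal (energyBound (log (1 / η)) |x|) := by
        refine lintegral_mono_ae ?_
        filter_upwards [ae_abs_ne 2, ae_abs_ne (1 / η)] with x h2 hη'
        exact ENNReal.ofReal_le_ofReal (energy_le hη h2 hη')
    _ ≤ ENNReal.ofReal (4 / log (1 / η)) := by
        rw [lintegral_energyBound_abs hL]
        exact ENNReal.ofReal_le_ofReal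
          (div_le_div_of_nonneg_right four_mul_log_two_add_three_div_le hL.le)

end neelShape

noncomputable def neelProfile (c η x : ℝ) : ℝ :=
  if |x| ≤ 2 then 1 - (1 - c) * log 2 / (4 * log (1 / η)) * x ^ 2
  else if |x| ≤ 1 / η then c + (1 - c) * log (1 / (η * |x|)) / log (1 / η)
  else c

theorem neelProfile_eq (c η x : ℝ) : neelProfile c η x = 1 - (1 - c) * neelShape η x := by
  unfold neelProfile neelShape
  split_ifs with h2 hη
  · ring
  · have hη0 : 0 < η := one_div_pos.1 (two_pos.trans ((not_le.1 h2).trans_le hη))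
    have hx : 0 < |x| := by linarith
    have hL : 0 < log (1 / η) := (log_pos (by linarith)).trans_le (log_le_log hx hη)
    have hlog : log (1 / (η * |x|)) = log (1 / η) - log |x| := by
      rw [one_div, log_inv, log_mul hη0.ne' hx.ne', one_div, log_inv]
      ring
    rw [hlog]
    field_simp
    ring
  · ring

theorem stmt_16 (α : ℝ) (hα : α ∈ Set.Ioc 0 (Real.pi / 2))
    (η : ℝ) (hη0 : 0 < η) (hη : η ≤ 1 / 2)
    (f : ℝ → ℝ)
    (hf : ∀ x : ℝ, f x =
      if |x| ≤ 2 then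
        1 - (1 - Real.cos α) * Real.log 2 / (4 * Real.log (1 / η)) * x ^ 2
      else if |x| ≤ 1 / η then
        Real.cos α + (1 - Real.cos α) * Real.log (1 / (η * |x|)) / Real.log (1 / η)
      else Real.cos α) :
    Continuous f ∧
    (∀ x : ℝ, Real.cos α ≤ f x ∧ f x ≤ 1) ∧
    (∀ x : ℝ, x ≠ 0 → f x < 1) ∧
    (∫⁻ x : ℝ, ENNReal.ofReal ((deriv f x) ^ 2 / (1 - f x ^ 2))) ≤
      ENNReal.ofReal (4 * (1 - Real.cos α) / Real.log (1 / η)) := by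
  have hc0 : 0 ≤ cos α := cos_nonneg_of_mem_Icc ⟨by linarith [pi_pos, hα.1], hα.2⟩
  have hc1 : cos α < 1 := by
    simpa using cos_lt_cos_of_nonneg_of_le_pi le_rfl (by linarith [pi_pos, hα.2]) hα.1
  have hη2 : 2 ≤ 1 / η := by rw [le_div_iff₀ hη0]; linarith
  obtain rfl : f = fun x => 1 - (1 - cos α) * neelShape η x :=
    funext fun x => (hf x).trans (neelProfile_eq _ _ x)
  have hφ := neelShape.mem_Icc hη2
  have hβφ (x : ℝ) : (1 - cos α) * neelShape η x ≤ 1 :=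
    mul_le_one₀ (by linarith) (hφ x).1 (hφ x).2
  refine ⟨continuous_const.sub (continuous_const.mul (neelShape.continuous hη2)),
    fun x => ⟨by nlinarith [(hφ x).2], by nlinarith [(hφ x).1]⟩,
    fun x hx => by nlinarith [neelShape.pos hη2 hx], ?_⟩
  calc _ ≤ ENNReal.ofReal (1 - cos α) *
        ∫⁻ x, ENNReal.ofReal (deriv (neelShape η) x ^ 2 / neelShape η x) :=
        lintegral_exchange_one_sub_mul_le (by linarith) (fun x => (hφ x).1) hβφ
    _ ≤ ENNReal.ofReal (1 - cos α) * ENNReal.ofReal (4 / log (1 / η)) := by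
        gcongr
        exact neelShape.lintegral_energy_le hη2
    _ = ENNReal.ofReal (4 * (1 - cos α) / log (1 / η)) := by
        rw [← ENNReal.ofReal_mul (by linarith)]
        ring_nf
end
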